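/- Fix $d \geq 2$, $0 < p < s < d$, $N \geq 1$, masses $m^0,\dots,m^N > 0$, $0 \leq k \leq N-1$, and fixed distinct points $a_0 = 0, a_1, \dots, a_k \in \mathbb{R}^d$ contained in $B_{R_0}(0)$. Let $y_1, \dots, y_{N-k}$ be distinct unit vectors. Then for all sufficiently large $R > 2R_0$, $\mathbf{F}_N(0, a_1, \dots, a_k, Ry_1, \dots, Ry_{N-k}) < \mathbf{F}_k(0, a_1, \dots, a_k)$, where $\mathbf{F}_j$ denotes the discrete energy $\sum_{i \neq l} \frac{m^i m^l}{|x_i - x_l|^s} - \sum_{i \geq 1} \frac{m^i}{|x_i|^p}$ over the respective $j+1$ points with masses $(m^0,\dots,m^j)$ and $(m^0,\dots,m^k)$ respectively. -/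

import Mathlib

/-!
Every pair of points involving one of the added points `R yᵢ` is at distance at least `δ R`,
where `δ ≤ 1/2` is the least separation of the directions `yᵢ` (the fixed points lie in
`B_{R₀}` and `R ≥ 2 R₀`). So the added repulsion is at most `(∑ mᵢ)² / (δ R)^s`, while the added
attraction is exactly `(∑_{i > k} mᵢ) / R^p`; since `p < s`, the attraction wins for large `R`.
-/

open MeasureTheory Metric Set Filter Finset
open scoped ENNReal Topology

/-- The discrete interaction energy `𝐅_{N,m}(x₀,…,x_N)` with Riesz repulsion exponent `s`
and attraction exponent `p` (the points are indexed by `0,…,N`). -/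
noncomputable def discF (d : ℕ) (s p : ℝ) (m : ℕ → ℝ)
    (x : ℕ → EuclideanSpace ℝ (Fin d)) (N : ℕ) : ℝ :=
  (∑ i ∈ Finset.range (N + 1), ∑ j ∈ Finset.range (N + 1),
      if i = j then 0 else m i * m j / ‖x i - x j‖ ^ s)
    - ∑ i ∈ Finset.Icc 1 N, m i / ‖x i‖ ^ p

lemma Finset.eventually_le_dist_of_ne {ι α : Type*} [MetricSpace α] (S : Finset ι)
    {y : ι → α} (hy : ∀ i ∈ S, ∀ j ∈ S, i ≠ j → y i ≠ y j) :
    ∀ᶠ δ in 𝓝[>] (0 : ℝ), ∀ i ∈ S, ∀ j ∈ S, i ≠ j → δ ≤ dist (y i) (y j) := by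
  refine (eventually_all_finset S).2 fun i hi => (eventually_all_finset S).2 fun j hj => ?_
  by_cases hij : i = j
  · exact Eventually.of_forall fun _ h => absurd hij h
  · filter_upwards [nhdsWithin_le_nhds (eventually_le_nhds (dist_pos.2 (hy i hi j hj hij)))]
      with δ hδ _ using hδ

lemma eventually_div_rpow_lt_div_rpow {A c δ s p : ℝ} (hc : 0 < c) (hδ : 0 < δ) (hps : p < s) :
    ∀ᶠ R in atTop, A / (δ * R) ^ s < c / R ^ p := by
  have hlim : Tendsto (fun R : ℝ => c * δ ^ s * R ^ (s - p)) atTop atTop :=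
    (tendsto_rpow_atTop (sub_pos.2 hps)).const_mul_atTop (by positivity)
  filter_upwards [hlim.eventually_gt_atTop A, eventually_gt_atTop 0] with R hA hR
  rw [Real.mul_rpow hδ.le hR.le, div_lt_div_iff₀ (by positivity) (by positivity)]
  calc A * R ^ p < c * δ ^ s * R ^ (s - p) * R ^ p := by gcongr
    _ = c * (δ ^ s * R ^ s) := by
      rw [mul_assoc, ← Real.rpow_add hR, sub_add_cancel]; ring

lemma half_le_norm_sub_of_norm_lt {E : Type*} [SeminormedAddCommGroup E] {u v : E} {R0 R : ℝ}
    (hu : ‖u‖ < R0) (hv : ‖v‖ = R) (hR : 2 * R0 ≤ R) : R / 2 ≤ ‖u - v‖ := by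
  have := norm_sub_norm_le v u
  rw [norm_sub_rev] at this
  linarith

noncomputable def rieszRepulsion (d : ℕ) (s : ℝ) (m : ℕ → ℝ)
    (x : ℕ → EuclideanSpace ℝ (Fin d)) (N : ℕ) : ℝ :=
  ∑ q ∈ range (N + 1) ×ˢ range (N + 1),
    if q.1 = q.2 then 0 else m q.1 * m q.2 / ‖x q.1 - x q.2‖ ^ s

noncomputable def attraction (d : ℕ) (p : ℝ) (m : ℕ → ℝ)
    (x : ℕ → EuclideanSpace ℝ (Fin d)) (N : ℕ) : ℝ :=
  ∑ i ∈ Ioc 0 N, m i / ‖x i‖ ^ p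

section Energy

variable {d : ℕ} {s p : ℝ} {m : ℕ → ℝ} {x a : ℕ → EuclideanSpace ℝ (Fin d)} {k N : ℕ}

lemma discF_eq_rieszRepulsion_sub_attraction :
    discF d s p m x N = rieszRepulsion d s m x N - attraction d p m x N := by
  rw [discF, rieszRepulsion, attraction, sum_product, ← Finset.Icc_add_one_left_eq_Ioc,
    zero_add]

lemma rieszRepulsion_le_add (hs : 0 ≤ s) (hm : ∀ i, 0 ≤ m i) (hkN : k ≤ N)
    (hxa : ∀ i ≤ k, x i = a i) {r : ℝ} (hr : 0 < r)
    (hsep : ∀ i ≤ N, ∀ j ≤ N, i ≠ j → k < max i j → r ≤ ‖x i - x j‖) :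
    rieszRepulsion d s m x N
      ≤ rieszRepulsion d s m a k + (∑ i ∈ range (N + 1), m i) ^ 2 / r ^ s := by
  set P := range (N + 1) ×ˢ range (N + 1)
  set Q := range (k + 1) ×ˢ range (k + 1)
  have hQP : Q ⊆ P := by
    have := range_subset_range.2 (Nat.succ_le_succ hkN)
    exact product_subset_product this this
  have hfixed : rieszRepulsion d s m a k =
      ∑ q ∈ Q, if q.1 = q.2 then 0 else m q.1 * m q.2 / ‖x q.1 - x q.2‖ ^ s := by
    refine sum_congr rfl fun q hq => ?_
    simp only [Q, mem_product, Finset.mem_range] at hq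
    rw [hxa q.1 (by omega), hxa q.2 (by omega)]
  rw [rieszRepulsion, hfixed, ← sum_sdiff hQP, add_comm]
  gcongr
  calc _ ≤ ∑ q ∈ P \ Q, m q.1 * m q.2 / r ^ s := by
        refine sum_le_sum fun q hq => ?_
        simp only [P, Q, Finset.mem_sdiff, mem_product, Finset.mem_range] at hq
        split_ifs with hq12
        · exact div_nonneg (mul_nonneg (hm _) (hm _)) (by positivity)
        · gcongr
          · exact mul_nonneg (hm _) (hm _)
          · exact hsep q.1 (by omega) q.2 (by omega) hq12 (by omega)
    _ ≤ ∑ q ∈ P, m q.1 * m q.2 / r ^ s :=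
        sum_le_sum_of_subset_of_nonneg sdiff_subset fun q _ _ =>
          div_nonneg (mul_nonneg (hm _) (hm _)) (by positivity)
    _ = (∑ i ∈ range (N + 1), m i) ^ 2 / r ^ s := by
        rw [← sum_div, sum_product, sq, sum_mul_sum]

lemma attraction_eq_add (hkN : k ≤ N) (hxa : ∀ i ≤ k, x i = a i) {R : ℝ}
    (hR : ∀ i, k < i → i ≤ N → ‖x i‖ = R) :
    attraction d p m x N = attraction d p m a k + (∑ i ∈ Ioc k N, m i) / R ^ p := by
  rw [attraction, attraction, ← sum_Ioc_consecutive _ k.zero_le hkN, sum_div]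
  congr 1
  · exact sum_congr rfl fun i hi => by rw [hxa i (mem_Ioc.1 hi).2]
  · exact sum_congr rfl fun i hi => by rw [hR i (mem_Ioc.1 hi).1 (mem_Ioc.1 hi).2]

lemma discF_le_add_sub (hs : 0 ≤ s) (hm : ∀ i, 0 ≤ m i) (hkN : k ≤ N)
    (hxa : ∀ i ≤ k, x i = a i) {r R : ℝ} (hr : 0 < r)
    (hsep : ∀ i ≤ N, ∀ j ≤ N, i ≠ j → k < max i j → r ≤ ‖x i - x j‖)
    (hR : ∀ i, k < i → i ≤ N → ‖x i‖ = R) :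
    discF d s p m x N ≤ discF d s p m a k + (∑ i ∈ range (N + 1), m i) ^ 2 / r ^ s
      - (∑ i ∈ Ioc k N, m i) / R ^ p := by
  rw [discF_eq_rieszRepulsion_sub_attraction, discF_eq_rieszRepulsion_sub_attraction,
    attraction_eq_add hkN hxa hR]
  linarith [rieszRepulsion_le_add hs hm hkN hxa hr hsep]

end Energy

lemma norm_smul_of_norm_eq_one {E : Type*} [SeminormedAddCommGroup E] [NormedSpace ℝ E]
    {u : E} {R : ℝ} (hu : ‖u‖ = 1) (hR : 0 ≤ R) : ‖R • u‖ = R := by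
  rw [norm_smul, hu, mul_one, Real.norm_of_nonneg hR]

lemma le_norm_sub_of_sphere_config {E : Type*} [NormedAddCommGroup E] [NormedSpace ℝ E]
    {a y : ℕ → E} {k N : ℕ} {R0 R δ : ℝ} (ha : ∀ i ≤ k, ‖a i‖ < R0)
    (hy : ∀ i, 1 ≤ i → i ≤ N - k → ‖y i‖ = 1)
    (hδy : ∀ i j, 1 ≤ i → i ≤ N - k → 1 ≤ j → j ≤ N - k → i ≠ j → δ ≤ ‖y i - y j‖)
    (hδ : δ ≤ 1 / 2) (hR0 : 2 * R0 ≤ R) (hR : 0 ≤ R) :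
    ∀ i ≤ N, ∀ j ≤ N, i ≠ j → k < max i j →
      δ * R ≤ ‖(if i ≤ k then a i else R • y (i - k))
        - (if j ≤ k then a j else R • y (j - k))‖ := by
  have hmixed : ∀ i ≤ k, ∀ j, k < j → j ≤ N → δ * R ≤ ‖a i - R • y (j - k)‖ :=
    fun i hi j hj hjN => le_trans (by nlinarith) (half_le_norm_sub_of_norm_lt (ha i hi)
      (norm_smul_of_norm_eq_one (hy _ (by omega) (by omega)) hR) hR0)
  intro i hi j hj hij hmax
  rcases le_or_gt i k with hik | hik <;> rcases le_or_gt j k with hjk | hjk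
  · omega
  · simpa [hik, hjk.not_ge] using hmixed i hik j hjk hj
  · simpa [hik.not_ge, hjk, norm_sub_rev] using hmixed j hjk i hik hi
  · rw [if_neg hik.not_ge, if_neg hjk.not_ge, ← smul_sub, norm_smul, Real.norm_of_nonneg hR,
      mul_comm]
    gcongr
    exact hδy _ _ (by omega) (by omega) (by omega) (by omega) (by omega)

lemma discF_sphere_config_le {d k N : ℕ} {s p R0 R δ : ℝ} {m : ℕ → ℝ}
    {a y : ℕ → EuclideanSpace ℝ (Fin d)} (hs : 0 ≤ s) (hm : ∀ i, 0 ≤ m i) (hkN : k ≤ N)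
    (ha : ∀ i ≤ k, ‖a i‖ < R0) (hy : ∀ i, 1 ≤ i → i ≤ N - k → ‖y i‖ = 1)
    (hδy : ∀ i j, 1 ≤ i → i ≤ N - k → 1 ≤ j → j ≤ N - k → i ≠ j → δ ≤ ‖y i - y j‖)
    (hδ0 : 0 < δ) (hδ : δ ≤ 1 / 2) (hR0 : 2 * R0 ≤ R) (hR : 0 < R) :
    discF d s p m (fun i => if i ≤ k then a i else R • y (i - k)) N
      ≤ discF d s p m a k + (∑ i ∈ range (N + 1), m i) ^ 2 / (δ * R) ^ s
        - (∑ i ∈ Ioc k N, m i) / R ^ p :=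
  discF_le_add_sub hs hm hkN (fun i hi => if_pos hi) (mul_pos hδ0 hR)
    (le_norm_sub_of_sphere_config ha hy hδy hδ hR0 hR.le) fun i hi hiN => by
      rw [if_neg hi.not_ge, norm_smul_of_norm_eq_one (hy _ (by omega) (by omega)) hR.le]

theorem stmt17_general (d N k : ℕ) (s p R0 : ℝ) (hp0 : 0 < p) (hps : p < s)
    (hN : 1 ≤ N) (hk : k ≤ N - 1) (hR0 : 0 < R0)
    (m : ℕ → ℝ) (hm : ∀ i, 0 < m i)
    (a : ℕ → EuclideanSpace ℝ (Fin d))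
    (haball : ∀ i ≤ k, a i ∈ ball (0 : EuclideanSpace ℝ (Fin d)) R0)
    (y : ℕ → EuclideanSpace ℝ (Fin d))
    (hy : ∀ i, 1 ≤ i → i ≤ N - k → ‖y i‖ = 1)
    (hydist : ∀ i j, 1 ≤ i → i ≤ N - k → 1 ≤ j → j ≤ N - k → i ≠ j → y i ≠ y j) :
    ∃ R1, 2 * R0 < R1 ∧ ∀ R ≥ R1,
      discF d s p m (fun i => if i ≤ k then a i else R • y (i - k)) N
        < discF d s p m a k := by
  have hsep := (Finset.Icc 1 (N - k)).eventually_le_dist_of_ne (y := y) fun i hi j hj =>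
    hydist i j (Finset.mem_Icc.1 hi).1 (Finset.mem_Icc.1 hi).2 (Finset.mem_Icc.1 hj).1
      (Finset.mem_Icc.1 hj).2
  have hpos : ∀ᶠ δ in 𝓝[>] (0 : ℝ), 0 < δ := self_mem_nhdsWithin
  have hsmall : ∀ᶠ δ in 𝓝[>] (0 : ℝ), δ ≤ 1 / 2 :=
    nhdsWithin_le_nhds (eventually_le_nhds (by norm_num))
  obtain ⟨δ, hδy, hδ, hδ_half⟩ := (hsep.and (hpos.and hsmall)).exists
  have hc : 0 < ∑ i ∈ Ioc k N, m i := sum_pos (fun i _ => hm i) ⟨k + 1, by simp; omega⟩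
  obtain ⟨R1, hR1⟩ := eventually_atTop.1
    (eventually_div_rpow_lt_div_rpow (A := (∑ i ∈ range (N + 1), m i) ^ 2) hc hδ hps)
  refine ⟨max R1 (2 * R0 + 1), by simp, fun R hR => ?_⟩
  have hR0R : 2 * R0 ≤ R := by linarith [le_of_max_le_right hR]
  have hδy' : ∀ i j, 1 ≤ i → i ≤ N - k → 1 ≤ j → j ≤ N - k → i ≠ j → δ ≤ ‖y i - y j‖ :=
    fun i j hi hi' hj hj' hij => by
      simpa [dist_eq_norm] using
        hδy i (Finset.mem_Icc.2 ⟨hi, hi'⟩) j (Finset.mem_Icc.2 ⟨hj, hj'⟩) hij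
  have hle := discF_sphere_config_le (p := p) (m := m) (hp0.trans hps).le (fun i => (hm i).le)
    (by omega) (fun i hi => mem_ball_zero_iff.1 (haball i hi)) hy hδy' hδ hδ_half hR0R
    (by linarith)
  linarith [hR1 R (le_of_max_le_left hR)]

/-- Sending `N - k` additional points to distinct directions on a large sphere of radius `R`
strictly lowers the discrete energy below that of the fixed `k + 1` points:
`𝐅_N(0, a₁, …, a_k, R y₁, …, R y_{N-k}) < 𝐅_k(0, a₁, …, a_k)` for all sufficiently
large `R > 2 R₀`. -/
theorem stmt17 (d N k : ℕ) (s p R0 : ℝ) (hd : 2 ≤ d) (hp0 : 0 < p) (hps : p < s)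
    (hsd : s < d) (hN : 1 ≤ N) (hk : k ≤ N - 1) (hR0 : 0 < R0)
    (m : ℕ → ℝ) (hm : ∀ i, 0 < m i)
    (a : ℕ → EuclideanSpace ℝ (Fin d)) (ha0 : a 0 = 0)
    (haball : ∀ i ≤ k, a i ∈ ball (0 : EuclideanSpace ℝ (Fin d)) R0)
    (hadist : ∀ i ≤ k, ∀ j ≤ k, i ≠ j → a i ≠ a j)
    (y : ℕ → EuclideanSpace ℝ (Fin d))
    (hy : ∀ i, 1 ≤ i → i ≤ N - k → ‖y i‖ = 1)
    (hydist : ∀ i j, 1 ≤ i → i ≤ N - k → 1 ≤ j → j ≤ N - k → i ≠ j → y i ≠ y j) :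
    ∃ R1, 2 * R0 < R1 ∧ ∀ R ≥ R1,
      discF d s p m (fun i => if i ≤ k then a i else R • y (i - k)) N
        < discF d s p m a k :=
  stmt17_general d N k s p R0 hp0 hps hN hk hR0 m hm a haball y hy hydist
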